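/- (Unbiased MVE semi-gradient.) Let S and A be finite nonempty sets, d : S → ℝ≥0 fixed nonnegative state weights, T̂ : S × A → ℝ a fixed target, θ₀ ∈ ℝⁿ, and q : ℝⁿ → S → A → ℝ with θ ↦ q θ s a differentiable at θ₀ for all (s,a). Let π̂(a|s) = π_{θ₀}(a|s) be the softmax policy of q θ₀ s, held fixed, and define V(θ) = (1/2) Σ_s d(s) [ Σ_a π̂(a|s)(T̂(s,a) − q θ s a)² − ( Σ_a π̂(a|s)(T̂(s,a) − q θ s a) )² ]. Then V is differentiable at θ₀ and −∇_θ V(θ₀) = Σ_{s,a} d(s) π_{θ₀}(a|s) (T̂(s,a) − q θ₀ s a) · ∇_θ log π_θ(a|s)|_{θ₀}. -/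

import Mathlib

/-!
With `π̂` frozen, `V` is a `d`-weighted sum of the variances of the residuals `r a = T̂ − q_θ`
under `π̂`. The derivative of `Var r = E[r²] − (E r)²` is `2 E[r (r' − E r')]`, and for a softmax
policy `∇ log π(a) = ∇ q_a − E_π ∇ q`, so with `r' = −∇ q` the centred term `r' − E r'` is exactly
`−∇ log π(a)`.
-/

open Finset

noncomputable def softmax {A : Type*} [Fintype A] (z : A → ℝ) (a : A) : ℝ :=
  Real.exp (z a) / ∑ u, Real.exp (z u)

/-- `Var_{a ∼ w} [r a]` when `w` is a probability vector. -/
def weightedVar {A : Type*} [Fintype A] (w r : A → ℝ) : ℝ :=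
  ∑ a, w a * r a ^ 2 - (∑ a, w a * r a) ^ 2

section

variable {A E : Type*} [Fintype A] [NormedAddCommGroup E] [NormedSpace ℝ E]

theorem sum_exp_pos [Nonempty A] (z : A → ℝ) : 0 < ∑ u, Real.exp (z u) :=
  sum_pos (fun u _ => Real.exp_pos (z u)) univ_nonempty

theorem log_softmax [Nonempty A] (z : A → ℝ) (a : A) :
    Real.log (softmax z a) = z a - Real.log (∑ u, Real.exp (z u)) := by
  rw [softmax, Real.log_div (Real.exp_ne_zero _) (sum_exp_pos z).ne', Real.log_exp]

variable {f : A → E → ℝ} {f' : A → StrongDual ℝ E} {x : E}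

theorem hasFDerivAt_log_sum_exp [Nonempty A] (hf : ∀ u, HasFDerivAt (f u) (f' u) x) :
    HasFDerivAt (fun y => Real.log (∑ u, Real.exp (f u y)))
      (∑ u, softmax (f · x) u • f' u) x := by
  refine ((HasFDerivAt.fun_sum fun u _ => (hf u).exp).log
    (sum_exp_pos (f · x)).ne').congr_fderiv ?_
  simp only [smul_sum, smul_smul, softmax, div_eq_inv_mul]

theorem hasFDerivAt_log_softmax [Nonempty A] (hf : ∀ u, HasFDerivAt (f u) (f' u) x) (a : A) :
    HasFDerivAt (fun y => Real.log (softmax (f · y) a))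
      (f' a - ∑ u, softmax (f · x) u • f' u) x := by
  simp only [log_softmax]
  exact (hf a).sub (hasFDerivAt_log_sum_exp hf)

theorem hasFDerivAt_weightedVar (w : A → ℝ) (hf : ∀ a, HasFDerivAt (f a) (f' a) x) :
    HasFDerivAt (fun y => weightedVar w (f · y))
      ((2 : ℝ) • ∑ a, (w a * f a x) • (f' a - ∑ u, w u • f' u)) x := by
  have hmean : HasFDerivAt (fun y => ∑ a, w a * f a y) (∑ a, w a • f' a) x :=
    .fun_sum fun a _ => (hf a).const_mul (w a)
  have hsq : HasFDerivAt (fun y => ∑ a, w a * f a y ^ 2) (∑ a, w a • (2 * f a x) • f' a) x :=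
    .fun_sum fun a _ => ((hf a).pow 2).const_mul (w a) |>.congr_fderiv (by simp)
  refine (hsq.sub (hmean.pow 2)).congr_fderiv ?_
  simp only [smul_sub, sum_sub_distrib, smul_sum, smul_smul]
  congr 1
  · exact sum_congr rfl fun a _ => by ring_nf
  · rw [sum_comm]
    refine sum_congr rfl fun u _ => ?_
    rw [← sum_smul, ← mul_sum, ← sum_mul]
    norm_num [mul_assoc]

theorem hasFDerivAt_weightedVar_const_sub (w c : A → ℝ) (hf : ∀ a, HasFDerivAt (f a) (f' a) x) :
    HasFDerivAt (fun y => weightedVar w fun a => c a - f a y)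
      (-((2 : ℝ) • ∑ a, (w a * (c a - f a x)) • (f' a - ∑ u, w u • f' u))) x := by
  refine (hasFDerivAt_weightedVar w fun a => (hf a).const_sub (c a)).congr_fderiv ?_
  simp only [smul_neg, sum_neg_distrib, neg_sub_neg, ← neg_sub (f' _)]

end

theorem mve_semi_gradient_general
    {n : ℕ} {S A : Type*} [Fintype S] [Fintype A] [Nonempty A]
    (θ₀ : EuclideanSpace ℝ (Fin n))
    (d : S → ℝ)
    (That : S × A → ℝ)
    (q : EuclideanSpace ℝ (Fin n) → S → A → ℝ)
    (hq : ∀ (s : S) (a : A), DifferentiableAt ℝ (fun θ => q θ s a) θ₀)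
    (π : EuclideanSpace ℝ (Fin n) → S → A → ℝ)
    (hπ : ∀ θ (s : S) (a : A),
      π θ s a = Real.exp (q θ s a) / ∑ u : A, Real.exp (q θ s u))
    (V : EuclideanSpace ℝ (Fin n) → ℝ)
    (hV : ∀ θ, V θ = (1 / 2) * ∑ s : S, d s *
      ((∑ a : A, π θ₀ s a * (That (s, a) - q θ s a) ^ 2) -
        (∑ a : A, π θ₀ s a * (That (s, a) - q θ s a)) ^ 2)) :
    DifferentiableAt ℝ V θ₀ ∧
    -gradient V θ₀ = ∑ s : S, ∑ a : A,
      (d s * π θ₀ s a * (That (s, a) - q θ₀ s a)) •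
        gradient (fun θ => Real.log (π θ s a)) θ₀ := by
  obtain rfl : π = fun θ s => softmax (q θ s) := by
    funext θ s a
    exact hπ θ s a
  obtain rfl : V = fun θ => (1 / 2) * ∑ s, d s *
      weightedVar (softmax (q θ₀ s)) (fun a => That (s, a) - q θ s a) := funext hV
  have hL s a := (hq s a).hasFDerivAt
  have hlog s a := (hasFDerivAt_log_softmax (hL s) a).fderiv
  have hderiv := HasFDerivAt.const_mul (HasFDerivAt.fun_sum (u := univ) fun s _ =>
    (hasFDerivAt_weightedVar_const_sub (softmax (q θ₀ s)) (fun a => That (s, a)) (hL s)).const_mul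
      (d s)) (1 / 2 : ℝ)
  refine ⟨hderiv.differentiableAt, ?_⟩
  simp only [gradient, hderiv.fderiv, hlog, ← map_smul, ← map_sum, ← map_neg]
  congr 1
  simp only [smul_neg, sum_neg_distrib, smul_sum, smul_smul, neg_neg]
  refine sum_congr rfl fun s _ => sum_congr rfl fun a _ => ?_
  congr 1
  ring

/-- Unbiased MVE semi-gradient: the (semi-)gradient of the mean-variance-error
objective (with a stop-gradient sampling policy `π̂ = π_{θ₀}`) is the weighted sum
of the per-sample estimators `(T̂(s,a) − q_θ(s,a)) • ∇ log π_θ(a|s)`. -/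
theorem mve_semi_gradient
    {n : ℕ} {S A : Type*} [Fintype S] [Fintype A] [Nonempty S] [Nonempty A]
    (θ₀ : EuclideanSpace ℝ (Fin n))
    (d : S → ℝ) (hd : ∀ s, 0 ≤ d s)
    (That : S × A → ℝ)
    (q : EuclideanSpace ℝ (Fin n) → S → A → ℝ)
    (hq : ∀ (s : S) (a : A), DifferentiableAt ℝ (fun θ => q θ s a) θ₀)
    (π : EuclideanSpace ℝ (Fin n) → S → A → ℝ)
    (hπ : ∀ θ (s : S) (a : A),
      π θ s a = Real.exp (q θ s a) / ∑ u : A, Real.exp (q θ s u))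
    (V : EuclideanSpace ℝ (Fin n) → ℝ)
    (hV : ∀ θ, V θ = (1 / 2) * ∑ s : S, d s *
      ((∑ a : A, π θ₀ s a * (That (s, a) - q θ s a) ^ 2) -
        (∑ a : A, π θ₀ s a * (That (s, a) - q θ s a)) ^ 2)) :
    DifferentiableAt ℝ V θ₀ ∧
    -gradient V θ₀ = ∑ s : S, ∑ a : A,
      (d s * π θ₀ s a * (That (s, a) - q θ₀ s a)) •
        gradient (fun θ => Real.log (π θ s a)) θ₀ :=
  mve_semi_gradient_general θ₀ d That q hq π hπ V hV
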